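/- arXiv:2104.06679 — 3 statements merged into one kernel-verified Lean document; each statement's English description precedes it below -/
import Mathlib

section
/- Let 0 < θ_th < π/2 and let h_B, h_G be real numbers with h_G < h_B. Then the ground-user main-lobe service width W_G(θ) = r_ub^G(θ) − r_lb^G(θ) = (h_B − h_G)·(cot(θ − θ_th) − cot(θ + θ_th)) is strictly decreasing on the open interval (θ_th, π/2). (Equivalently, the width of the main-lobe service area for ground users increases as the down-tilt angle θ decreases toward θ_th.) -/
open Real Set

/-- Corollary 1 (ground-user part): for `0 < θ_th < π/2` and `h_G < h_B`, the
ground-user main-lobe service width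
`W_G(θ) = (h_B − h_G)·(cot(θ − θ_th) − cot(θ + θ_th))`
is strictly decreasing on the open interval `(θ_th, π/2)`. -/
theorem ground_main_lobe_width_strictAntiOn
    (θth hB hG : ℝ) (hθ0 : 0 < θth) (hθπ : θth < π / 2) (hGB : hG < hB) :
    StrictAntiOn (fun θ : ℝ => (hB - hG) * (Real.cot (θ - θth) - Real.cot (θ + θth)))
      (Set.Ioo θth (π / 2)) := by
  have hπ := Real.pi_pos
  -- rewrite the difference of cotangents
  have key : ∀ θ ∈ Set.Ioo θth (π / 2),
      Real.cot (θ - θth) - Real.cot (θ + θth)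
        = Real.sin (2 * θth) / (Real.sin θ ^ 2 - Real.sin θth ^ 2) := by
    rintro θ ⟨h1, h2⟩
    have hs1 : 0 < Real.sin (θ - θth) :=
      Real.sin_pos_of_pos_of_lt_pi (by linarith) (by linarith)
    have hs2 : 0 < Real.sin (θ + θth) :=
      Real.sin_pos_of_pos_of_lt_pi (by linarith) (by linarith)
    have hD : Real.sin (θ - θth) * Real.sin (θ + θth)
        = Real.sin θ ^ 2 - Real.sin θth ^ 2 := by
      rw [Real.sin_sub, Real.sin_add]
      have h3 := Real.sin_sq_add_cos_sq θ
      have h4 := Real.sin_sq_add_cos_sq θth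
      nlinarith
    have hnum : Real.cos (θ - θth) * Real.sin (θ + θth)
        - Real.sin (θ - θth) * Real.cos (θ + θth) = Real.sin (2 * θth) := by
      have h5 := Real.sin_sub (θ + θth) (θ - θth)
      rw [show (θ + θth) - (θ - θth) = 2 * θth by ring] at h5
      rw [h5]; ring
    rw [Real.cot_eq_cos_div_sin, Real.cot_eq_cos_div_sin,
      div_sub_div _ _ hs1.ne' hs2.ne', hnum, hD]
  intro x hx y hy hxy
  obtain ⟨hx1, hx2⟩ := hx
  obtain ⟨hy1, hy2⟩ := hy
  have hsin : ∀ a b : ℝ, 0 ≤ a → a < b → b < π / 2 → Real.sin a < Real.sin b := by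
    intro a b ha hab hb
    exact Real.strictMonoOn_sin ⟨by linarith, by linarith⟩ ⟨by linarith, by linarith⟩ hab
  have hsx : Real.sin θth < Real.sin x := hsin θth x hθ0.le hx1 hx2
  have hsy : Real.sin x < Real.sin y := hsin x y (by linarith) hxy hy2
  have hsth : 0 ≤ Real.sin θth := Real.sin_nonneg_of_nonneg_of_le_pi hθ0.le (by linarith)
  have hDx : 0 < Real.sin x ^ 2 - Real.sin θth ^ 2 := by nlinarith
  have hDxy : Real.sin x ^ 2 - Real.sin θth ^ 2 < Real.sin y ^ 2 - Real.sin θth ^ 2 := by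
    nlinarith
  have hsin2 : 0 < Real.sin (2 * θth) :=
    Real.sin_pos_of_pos_of_lt_pi (by linarith) (by linarith)
  have hmain : Real.sin (2 * θth) / (Real.sin y ^ 2 - Real.sin θth ^ 2)
      < Real.sin (2 * θth) / (Real.sin x ^ 2 - Real.sin θth ^ 2) :=
    div_lt_div_of_pos_left hsin2 hDx hDxy
  simp only
  rw [key x ⟨hx1, hx2⟩, key y ⟨hy1, hy2⟩]
  exact mul_lt_mul_of_pos_left hmain (by linarith)
end

section
/- Let 0 < θ_th < π/2 and let h_A, h_B be real numbers with h_A > h_B. Then the aerial-user main-lobe service width W_A(θ) = r_ub^A(θ) − r_lb^A(θ) = (h_A − h_B)·(cot(−θ − θ_th) − cot(−θ + θ_th)) is strictly increasing on the open interval (−π/2, −θ_th). (Equivalently, the width of the main-lobe service area for aerial users increases as the up-tilt angle θ increases toward −θ_th.) -/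
open Real Set

lemma my_hasDerivAt_cot {x : ℝ} (h : Real.sin x ≠ 0) :
    HasDerivAt Real.cot (-(1 / Real.sin x ^ 2)) x := by
  have hd : HasDerivAt (fun y => Real.cos y / Real.sin y)
      ((-Real.sin x * Real.sin x - Real.cos x * Real.cos x) / Real.sin x ^ 2) x :=
    (Real.hasDerivAt_cos x).div (Real.hasDerivAt_sin x) h
  have hfun : (fun y => Real.cos y / Real.sin y) = Real.cot := by
    funext y; rw [Real.cot_eq_cos_div_sin]
  rw [hfun] at hd
  convert hd using 1
  have hpy := Real.sin_sq_add_cos_sq x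
  field_simp
  nlinarith [hpy]

/-- Corollary 1 (aerial-user part): for `0 < θ_th < π/2` and `h_A > h_B`, the
aerial-user main-lobe service width
`W_A(θ) = (h_A − h_B)·(cot(−θ − θth) − cot(−θ + θth))`
is strictly increasing on the open interval `(−π/2, −θth)`. -/
theorem aerial_main_lobe_width_strictMonoOn
    (θth hA hB : ℝ) (hθ0 : 0 < θth) (hθπ : θth < π / 2) (hAB : hA > hB) :
    StrictMonoOn (fun θ : ℝ => (hA - hB) * (Real.cot (-θ - θth) - Real.cot (-θ + θth)))
      (Set.Ioo (-(π / 2)) (-θth)) := by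
  have hc : 0 < hA - hB := sub_pos.mpr hAB
  -- sin positivity facts for θ in the interval
  have hsina : ∀ θ ∈ Set.Ioo (-(π / 2)) (-θth), 0 < Real.sin (-θ - θth) := by
    intro θ hθ
    apply Real.sin_pos_of_pos_of_lt_pi
    · linarith [hθ.2]
    · have := hθ.1; nlinarith [Real.pi_pos]
  have hsinb : ∀ θ ∈ Set.Ioo (-(π / 2)) (-θth), 0 < Real.sin (-θ + θth) := by
    intro θ hθ
    apply Real.sin_pos_of_pos_of_lt_pi
    · linarith [hθ.2]
    · have := hθ.1; nlinarith [Real.pi_pos]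
  have hderiv : ∀ θ ∈ Set.Ioo (-(π / 2)) (-θth),
      HasDerivAt (fun θ : ℝ => (hA - hB) * (Real.cot (-θ - θth) - Real.cot (-θ + θth)))
        ((hA - hB) * (1 / Real.sin (-θ - θth) ^ 2 - 1 / Real.sin (-θ + θth) ^ 2)) θ := by
    intro θ hθ
    have ha := (hsina θ hθ).ne'
    have hb := (hsinb θ hθ).ne'
    have h1 : HasDerivAt (fun θ : ℝ => Real.cot (-θ - θth))
        (-(1 / Real.sin (-θ - θth) ^ 2) * (-1)) θ := by
      exact (my_hasDerivAt_cot ha).comp θ (((hasDerivAt_id θ).neg).sub_const θth)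
    have h2 : HasDerivAt (fun θ : ℝ => Real.cot (-θ + θth))
        (-(1 / Real.sin (-θ + θth) ^ 2) * (-1)) θ := by
      exact (my_hasDerivAt_cot hb).comp θ (((hasDerivAt_id θ).neg).add_const θth)
    have : HasDerivAt (fun θ : ℝ => (hA - hB) * (Real.cot (-θ - θth) - Real.cot (-θ + θth)))
        ((hA - hB) * (-(1 / Real.sin (-θ - θth) ^ 2) * (-1) - -(1 / Real.sin (-θ + θth) ^ 2) * (-1))) θ :=
      ((h1.sub h2).const_mul (hA - hB))
    convert this using 1
    ring
  apply StrictMonoOn.mono ?_ (le_refl _)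
  apply strictMonoOn_of_deriv_pos (convex_Ioo _ _)
  · intro θ hθ
    exact (hderiv θ hθ).continuousAt.continuousWithinAt
  · intro θ hθ
    rw [interior_Ioo] at hθ
    rw [(hderiv θ hθ).deriv]
    apply mul_pos hc
    have ha := hsina θ hθ
    have hb := hsinb θ hθ
    -- sin(-θ+θth) > sin(-θ-θth)
    have hab : Real.sin (-θ - θth) < Real.sin (-θ + θth) := by
      have h := Real.sin_sub_sin (-θ + θth) (-θ - θth)
      have hcos : 0 < Real.cos (-θ) := by
        apply Real.cos_pos_of_mem_Ioo
        constructor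
        · linarith [hθ.2, Real.pi_pos]
        · linarith [hθ.1]
      have hsin : 0 < Real.sin θth := Real.sin_pos_of_pos_of_lt_pi hθ0 (by linarith [Real.pi_pos])
      have : ((-θ + θth) - (-θ - θth)) / 2 = θth := by ring
      rw [this] at h
      have : ((-θ + θth) + (-θ - θth)) / 2 = -θ := by ring
      rw [this] at h
      nlinarith
    have h2 : Real.sin (-θ - θth) ^ 2 < Real.sin (-θ + θth) ^ 2 := by nlinarith
    have := one_div_lt_one_div_of_lt (by positivity) h2
    linarith
end

section
/- Let λ > 0, ω > 0, G > 0, h ≥ 0, and 0 ≤ b₁ ≤ b₂. Then ∫_{b₁}^{b₂} 2πλ·r·e^(−πλ·r²) · e^(−ω·(r² + h²)²/G) dr = πλ · √(G/ω) · e^(πλ·h² + (πλ)²·G/(4ω)) · ∫_{s(b₁)}^{s(b₂)} e^(−s²) ds, where s(b) = √(ω/G)·(b² + h²) + (πλ/2)·√(G/ω). -/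
open Real Set MeasureTheory intervalIntegral

/-- Closed-form evaluation of the outage integral in the noise-limited NLoS
environment with path-loss exponent 4 and constant antenna gain `G`
(Corollary 3): for `λ > 0`, `ω > 0`, `G > 0`, `h ≥ 0`, and `0 ≤ b₁ ≤ b₂`,
`∫_{b₁}^{b₂} 2πλ·r·e^(−πλ·r²)·e^(−ω·(r² + h²)²/G) dr
  = πλ·√(G/ω)·e^(πλ·h² + (πλ)²·G/(4ω))·∫_{s(b₁)}^{s(b₂)} e^(−s²) ds`,
where `s(b) = √(ω/G)·(b² + h²) + (πλ/2)·√(G/ω)`. -/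
theorem outage_integral_closed_form (lam ω G h b₁ b₂ : ℝ)
    (hlam : 0 < lam) (hω : 0 < ω) (hG : 0 < G) (hh : 0 ≤ h)
    (hb₁ : 0 ≤ b₁) (hb : b₁ ≤ b₂) :
    ∫ r in b₁..b₂,
        2 * π * lam * r * Real.exp (-(π * lam * r ^ 2)) *
          Real.exp (-(ω * (r ^ 2 + h ^ 2) ^ 2 / G))
      = π * lam * Real.sqrt (G / ω) *
          Real.exp (π * lam * h ^ 2 + (π * lam) ^ 2 * G / (4 * ω)) *
          ∫ s in (Real.sqrt (ω / G) * (b₁ ^ 2 + h ^ 2) + (π * lam / 2) * Real.sqrt (G / ω))..(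
              Real.sqrt (ω / G) * (b₂ ^ 2 + h ^ 2) + (π * lam / 2) * Real.sqrt (G / ω)),
            Real.exp (-(s ^ 2)) := by
  have hωG : (0:ℝ) < ω / G := div_pos hω hG
  have hGω : (0:ℝ) < G / ω := div_pos hG hω
  set a := Real.sqrt (ω / G) with ha_def
  set b := Real.sqrt (G / ω) with hb_def
  have ha2 : a ^ 2 = ω / G := Real.sq_sqrt hωG.le
  have hb2 : b ^ 2 = G / ω := Real.sq_sqrt hGω.le
  have hab : a * b = 1 := by
    rw [ha_def, hb_def, ← Real.sqrt_mul hωG.le]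
    rw [div_mul_div_comm, mul_comm ω G, div_self (by positivity), Real.sqrt_one]
  have key : ∫ x in b₁..b₂,
      (2 * a * x) • ((fun s => Real.exp (-(s ^ 2))) ∘
        (fun x => a * (x ^ 2 + h ^ 2) + π * lam / 2 * b)) x
      = ∫ s in (a * (b₁ ^ 2 + h ^ 2) + π * lam / 2 * b)..(
          a * (b₂ ^ 2 + h ^ 2) + π * lam / 2 * b), Real.exp (-(s ^ 2)) := by
    apply intervalIntegral.integral_comp_smul_deriv
    · intro x _
      have h1 : HasDerivAt (fun x : ℝ => a * (x ^ 2 + h ^ 2) + π * lam / 2 * b)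
          (a * ((2 : ℕ) * x ^ (2 - 1))) x :=
        (((hasDerivAt_pow 2 x).add_const (h ^ 2)).const_mul a).add_const (π * lam / 2 * b)
      convert h1 using 1
      push_cast
      ring
    · exact (Continuous.continuousOn (by continuity))
    · continuity
  rw [show (π * lam / 2 * Real.sqrt (G / ω)) = π * lam / 2 * b from rfl]
  rw [← key, ← intervalIntegral.integral_const_mul]
  apply intervalIntegral.integral_congr
  intro x _
  simp only [Function.comp, smul_eq_mul]
  rw [mul_assoc, ← Real.exp_add]
  have hrhs : π * lam * b * Real.exp (π * lam * h ^ 2 + (π * lam) ^ 2 * G / (4 * ω)) *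
      (2 * a * x * Real.exp (-((a * (x ^ 2 + h ^ 2) + π * lam / 2 * b) ^ 2)))
      = (π * lam * b * (2 * a * x)) *
        Real.exp ((π * lam * h ^ 2 + (π * lam) ^ 2 * G / (4 * ω)) +
          -((a * (x ^ 2 + h ^ 2) + π * lam / 2 * b) ^ 2)) := by
    rw [Real.exp_add (π * lam * h ^ 2 + (π * lam) ^ 2 * G / (4 * ω))
      (-((a * (x ^ 2 + h ^ 2) + π * lam / 2 * b) ^ 2))]
    ring
  rw [hrhs]
  have hcoef : π * lam * b * (2 * a * x) = 2 * π * lam * x := by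
    have : π * lam * b * (2 * a * x) = 2 * π * lam * x * (a * b) := by ring
    rw [this, hab, mul_one]
  have hexp : (π * lam * h ^ 2 + (π * lam) ^ 2 * G / (4 * ω)) +
      -((a * (x ^ 2 + h ^ 2) + π * lam / 2 * b) ^ 2)
      = -(π * lam * x ^ 2) + -(ω * (x ^ 2 + h ^ 2) ^ 2 / G) := by
    linear_combination (-(x ^ 2 + h ^ 2) ^ 2) * ha2 + (-(π * lam) ^ 2 / 4) * hb2 +
      (-(π * lam) * (x ^ 2 + h ^ 2)) * hab
  rw [hcoef, hexp]
end
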